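/- arXiv:math/0204029 — 3 statements merged into one kernel-verified Lean document; each statement's English description precedes it below -/
import Mathlib

section
/- If the Haar state φ of H is faithful and α is a coaction of H on A with bounded counit condition (id_A ⊗ ε)∘α = id_A, then E = (id_A ⊗ φ)∘α is a faithful conditional expectation from A onto A^α. -/
/-!
`E = (id ⊗ φ) ∘ α` is positive because a state is completely positive: on finite sums of
elementary tensors `(id ⊗ φ)(t⋆ t)` is a sum of squares, by factoring the Gram matrix
`(φ (hᵢ⋆ hⱼ))`, and density extends this to all of `A ⊗ H`. Slicing the coaction identity
`(α ⊗ id) ∘ α = (id ⊗ δ) ∘ α` with `id ⊗ id ⊗ φ` and using invariance `(id ⊗ φ) ∘ δ = φ(·) 1`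
gives `α (E a) = E a ⊗ 1`; together with `E (b a c) = b E(a) c` for fixed `b, c`, this makes `E`
a conditional expectation, and the Kadison–Schwarz inequality `E(a)⋆ E(a) ≤ E(a⋆ a)` makes it
contractive. For faithfulness, if `a ≥ 0` and `E a = 0`, then `φ ((ψ ⊗ id)(α a)) = ψ (E a) = 0`
for every state `ψ`, so the positive element `(ψ ⊗ id)(α a)` vanishes since `φ` is faithful;
these slices separate positive elements, so `α a = 0`, and the counit gives `a = 0`.
-/

open scoped ComplexOrder

/-- A state on a unital C⋆-algebra: a positive unital continuous linear functional. -/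
def IsState {H : Type*} [CStarAlgebra H] (φ : H →L[ℂ] ℂ) : Prop :=
  φ 1 = 1 ∧ ∀ x : H, 0 ≤ φ (star x * x)

/-- An element of a C⋆-algebra is positive iff it is of the form `star y * y`. -/
def IsPos {A : Type*} [CStarAlgebra A] (x : A) : Prop := ∃ y : A, x = star y * y

open scoped CStarAlgebra

section Positivity

variable {A H : Type*} [CStarAlgebra A] [CStarAlgebra H]

theorem IsPos.map {B : Type*} [CStarAlgebra B] {x : A} (hx : IsPos x) (f : A →⋆ₐ[ℂ] B) :
    IsPos (f x) := by
  obtain ⟨y, rfl⟩ := hx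
  exact ⟨f y, by rw [map_mul, map_star]⟩

noncomputable def PositiveLinearMap.ofStarMulSelfNonneg [PartialOrder A] [StarOrderedRing A]
    {B : Type*} [AddCommGroup B] [PartialOrder B] [IsOrderedAddMonoid B] [Module ℂ B]
    (f : A →ₗ[ℂ] B) (hf : ∀ x, 0 ≤ f (star x * x)) : A →ₚ[ℂ] B :=
  .mk₀ f fun x hx => by
    obtain ⟨y, rfl⟩ := CStarAlgebra.nonneg_iff_eq_star_mul_self.mp hx
    exact hf y

theorem Matrix.PosSemidef.exists_eq_conjTranspose_mul_self {n : Type*} [Fintype n]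
    {M : Matrix n n ℂ} (hM : M.PosSemidef) :
    ∃ B : Matrix n n ℂ, M = B.conjTranspose * B := by
  classical
  open scoped MatrixOrder Matrix.Norms.L2Operator in
  exact CStarAlgebra.nonneg_iff_eq_star_mul_self.mp hM.nonneg

/-- The Gram matrix `(φ (hᵢ⋆ hⱼ))` factors as `B⋆ B`, which turns the sum into
`∑ₖ (∑ᵢ Bₖᵢ • aᵢ)⋆ (∑ⱼ Bₖⱼ • aⱼ)`. -/
theorem sum_smul_star_mul_nonneg [PartialOrder A] [StarOrderedRing A] {ι : Type*} [Fintype ι]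
    (φ : H →ₗ[ℂ] ℂ) (hφ : ∀ x, 0 ≤ φ (star x * x)) (a : ι → A) (h : ι → H) :
    0 ≤ ∑ i, ∑ j, φ (star (h i) * h j) • (star (a i) * a j) := by
  let := CStarAlgebra.spectralOrder H
  let := CStarAlgebra.spectralOrderedRing H
  let f := PositiveLinearMap.ofStarMulSelfNonneg φ hφ
  obtain ⟨B, hB⟩ :=
    (Matrix.posSemidef_gram ℂ fun i => f.toPreGNS (h i)).exists_eq_conjTranspose_mul_self
  have hentry : ∀ i j, φ (star (h i) * h j) = ∑ k, star (B k i) * B k j := fun i j => by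
    change f (star (h i) * h j) = _
    simpa [Matrix.mul_apply, PositiveLinearMap.preGNS_inner_def] using
      congrFun (congrFun hB i) j
  have hsum : ∑ i, ∑ j, φ (star (h i) * h j) • (star (a i) * a j)
      = ∑ k, star (∑ i, B k i • a i) * ∑ j, B k j • a j := by
    simp only [hentry, Finset.sum_smul, star_sum, star_smul, Finset.sum_mul, Finset.mul_sum,
      smul_mul_smul_comm]
    rw [Finset.sum_comm_cycle]
    exact Finset.sum_congr rfl fun _ _ => Finset.sum_comm
  rw [hsum]
  exact Finset.sum_nonneg fun k _ => star_mul_self_nonneg _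

end Positivity

section ConditionalExpectation

variable {A : Type*} [CStarAlgebra A] [PartialOrder A] [StarOrderedRing A]
  {E : A →ₚ[ℂ] A} {B : StarSubalgebra ℂ A}

/-- Kadison–Schwarz inequality, from `0 ≤ E ((a - E a)⋆ (a - E a))`. -/
theorem PositiveLinearMap.star_mul_self_le_of_bimodule (hrange : ∀ a, E a ∈ B)
    (hunit : E 1 = 1) (hbimod : ∀ a, ∀ b ∈ B, ∀ c ∈ B, E (b * a * c) = b * E a * c) (a : A) :
    star (E a) * E a ≤ E (star a * a) := by
  have hEa := hrange a
  have hEa' : star (E a) ∈ B := star_mem hEa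
  have h₁ : E (star a * E a) = star (E a) * E a := by
    simpa [map_star] using hbimod (star a) 1 B.one_mem (E a) hEa
  have h₂ : E (star (E a) * a) = star (E a) * E a := by
    simpa using hbimod a (star (E a)) hEa' 1 B.one_mem
  have h₃ : E (star (E a) * E a) = star (E a) * E a := by
    simpa [hunit] using hbimod 1 (star (E a)) hEa' (E a) hEa
  have hexpand : star (a - E a) * (a - E a)
      = star a * a - star a * E a - star (E a) * a + star (E a) * E a := by
    rw [star_sub]; noncomm_ring
  have hnonneg : 0 ≤ E (star (a - E a) * (a - E a)) := E.map_nonneg (star_mul_self_nonneg _)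
  rw [hexpand, map_add, map_sub, map_sub, h₁, h₂, h₃] at hnonneg
  exact sub_nonneg.mp (by simpa using hnonneg)

theorem PositiveLinearMap.norm_apply_le_of_bimodule (hrange : ∀ a, E a ∈ B)
    (hunit : E 1 = 1) (hbimod : ∀ a, ∀ b ∈ B, ∀ c ∈ B, E (b * a * c) = b * E a * c) (a : A) :
    ‖E a‖ ≤ ‖a‖ := by
  rcases subsingleton_or_nontrivial A with _ | _
  · simp [Subsingleton.elim a 0]
  have hsq : ‖E a‖ * ‖E a‖ ≤ ‖a‖ * ‖a‖ :=
    calc ‖E a‖ * ‖E a‖ = ‖star (E a) * E a‖ := CStarRing.norm_star_mul_self.symm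
      _ ≤ ‖E (star a * a)‖ := CStarAlgebra.norm_le_norm_of_nonneg_of_le
          (star_mul_self_nonneg _) (E.star_mul_self_le_of_bimodule hrange hunit hbimod a)
      _ ≤ ‖E 1‖ * ‖star a * a‖ := E.norm_apply_le_of_nonneg _ (star_mul_self_nonneg a)
      _ = ‖a‖ * ‖a‖ := by rw [hunit, norm_one, one_mul, CStarRing.norm_star_mul_self]
  exact mul_self_le_mul_self_iff (norm_nonneg _) (norm_nonneg _) |>.mpr hsq

end ConditionalExpectation

theorem LinearMap.eq_of_eqOn_of_closure_span_eq_univ {M V : Type*} [AddCommMonoid M]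
    [Module ℂ M] [TopologicalSpace M] [AddCommMonoid V] [Module ℂ V] [TopologicalSpace V]
    [T2Space V] {s : Set M} (hs : closure (Submodule.span ℂ s : Set M) = Set.univ)
    {f g : M →ₗ[ℂ] V} (hf : Continuous f) (hg : Continuous g) (h : Set.EqOn f g s) (x : M) :
    f x = g x :=
  DFunLike.congr_fun (ContinuousLinearMap.ext_on (f := ⟨f, hf⟩) (g := ⟨g, hg⟩)
    (dense_iff_closure_eq.mpr hs) h) x

section Slice

variable {A H T : Type*} [CStarAlgebra A] [CStarAlgebra H] [CStarAlgebra T]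
  {jA : A →⋆ₐ[ℂ] T} {jH : H →⋆ₐ[ℂ] T} {φ : H →L[ℂ] ℂ} {Φ : T →L[ℂ] A}

theorem star_jA_mul_jH (hjcomm : ∀ (a : A) (h : H), Commute (jA a) (jH h)) (a : A) (h : H) :
    star (jA a * jH h) = jA (star a) * jH (star h) := by
  rw [star_mul, ← map_star, ← map_star, (hjcomm _ _).eq]

theorem jA_mul_jH_mul_jA_mul_jH (hjcomm : ∀ (a : A) (h : H), Commute (jA a) (jH h))
    (a a' : A) (h h' : H) : jA a * jH h * (jA a' * jH h') = jA (a * a') * jH (h * h') := by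
  rw [(hjcomm a' h).symm.mul_mul_mul_comm, map_mul, map_mul]

theorem slice_jA (hφ1 : φ 1 = 1) (hΦ : ∀ (a : A) (h : H), Φ (jA a * jH h) = φ h • a) (a : A) :
    Φ (jA a) = a := by
  simpa [hφ1] using hΦ a 1

theorem slice_jA_mul_mul_jA (hjcomm : ∀ (a : A) (h : H), Commute (jA a) (jH h))
    (hjdense : closure
      (Submodule.span ℂ {t : T | ∃ (a : A) (h : H), t = jA a * jH h} : Set T) = Set.univ)
    (hΦ : ∀ (a : A) (h : H), Φ (jA a * jH h) = φ h • a) (b c : A) (t : T) :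
    Φ (jA b * t * jA c) = b * Φ t * c := by
  refine LinearMap.eq_of_eqOn_of_closure_span_eq_univ hjdense
    (f := Φ.toLinearMap ∘ₗ LinearMap.mulRight ℂ (jA c) ∘ₗ LinearMap.mulLeft ℂ (jA b))
    (g := LinearMap.mulRight ℂ c ∘ₗ LinearMap.mulLeft ℂ b ∘ₗ Φ.toLinearMap)
    (by fun_prop : Continuous fun t => Φ (jA b * t * jA c))
    (by fun_prop : Continuous fun t => b * Φ t * c) ?_ t
  rintro _ ⟨a, h, rfl⟩
  have hmul : jA b * (jA a * jH h) * jA c = jA (b * a * c) * jH h := by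
    rw [mul_assoc, mul_assoc, ← (hjcomm c h).eq]; simp only [map_mul, mul_assoc]
  change Φ (jA b * (jA a * jH h) * jA c) = b * Φ (jA a * jH h) * c
  rw [hmul, hΦ, hΦ, mul_smul_comm, smul_mul_assoc]

theorem slice_star_mul_self_nonneg [PartialOrder A] [StarOrderedRing A]
    (hφ : ∀ x, 0 ≤ φ (star x * x)) (hjcomm : ∀ (a : A) (h : H), Commute (jA a) (jH h))
    (hjdense : closure
      (Submodule.span ℂ {t : T | ∃ (a : A) (h : H), t = jA a * jH h} : Set T) = Set.univ)
    (hΦ : ∀ (a : A) (h : H), Φ (jA a * jH h) = φ h • a) (t : T) :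
    0 ≤ Φ (star t * t) := by
  have hclosed : IsClosed {t : T | 0 ≤ Φ (star t * t)} :=
    CStarAlgebra.isClosed_nonneg.preimage (by fun_prop)
  have hspan : (Submodule.span ℂ {t : T | ∃ (a : A) (h : H), t = jA a * jH h} : Set T)
      ⊆ {t : T | 0 ≤ Φ (star t * t)} := by
    intro t ht
    obtain ⟨n, c, g, rfl⟩ := Submodule.mem_span_set'.mp ht
    choose a h hg using fun i => (g i).2
    have hsum : ∑ i, c i • (g i : T) = ∑ i, jA (c i • a i) * jH (h i) := by
      simp only [hg, map_smul, smul_mul_assoc]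
    have hexpand : Φ (star (∑ i, jA (c i • a i) * jH (h i)) * ∑ i, jA (c i • a i) * jH (h i))
        = ∑ i, ∑ j, φ (star (h i) * h j) • (star (c i • a i) * (c j • a j)) := by
      simp only [star_sum, Finset.sum_mul, Finset.mul_sum, map_sum, star_jA_mul_jH hjcomm,
        jA_mul_jH_mul_jA_mul_jH hjcomm, hΦ]
      exact Finset.sum_comm
    show 0 ≤ _
    rw [hsum, hexpand]
    exact sum_smul_star_mul_nonneg φ.toLinearMap hφ _ _
  exact closure_minimal hspan hclosed (by simp [hjdense] : t ∈ _)

theorem apply_slice_comm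
    (hjdense : closure
      (Submodule.span ℂ {t : T | ∃ (a : A) (h : H), t = jA a * jH h} : Set T) = Set.univ)
    (hΦ : ∀ (a : A) (h : H), Φ (jA a * jH h) = φ h • a) {ψ : A →L[ℂ] ℂ} {R : T →L[ℂ] H}
    (hR : ∀ (a : A) (h : H), R (jA a * jH h) = ψ a • h) (t : T) : ψ (Φ t) = φ (R t) := by
  refine LinearMap.eq_of_eqOn_of_closure_span_eq_univ hjdense
    (f := ψ.toLinearMap ∘ₗ Φ.toLinearMap) (g := φ.toLinearMap ∘ₗ R.toLinearMap)
    (by fun_prop : Continuous fun t => ψ (Φ t)) (by fun_prop : Continuous fun t => φ (R t)) ?_ t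
  rintro _ ⟨a, h, rfl⟩
  change ψ (Φ (jA a * jH h)) = φ (R (jA a * jH h))
  rw [hΦ, hR, map_smul, map_smul, smul_eq_mul, smul_eq_mul, mul_comm]

theorem eq_zero_of_isPos_of_slice_eq_zero {R : (A →L[ℂ] ℂ) → T →L[ℂ] H}
    (hφfaithful : ∀ h : H, φ (star h * h) = 0 → h = 0)
    (hRpos : ∀ ψ : A →L[ℂ] ℂ, IsState ψ → ∀ x : T, IsPos x → IsPos (R ψ x))
    (hRsep : ∀ x : T, IsPos x → (∀ ψ : A →L[ℂ] ℂ, IsState ψ → R ψ x = 0) → x = 0)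
    (hcomm : ∀ ψ : A →L[ℂ] ℂ, IsState ψ → ∀ t, ψ (Φ t) = φ (R ψ t))
    {x : T} (hx : IsPos x) (hΦx : Φ x = 0) : x = 0 := by
  refine hRsep x hx fun ψ hψ => ?_
  obtain ⟨k, hk⟩ := hRpos ψ hψ x hx
  have hφk : φ (star k * k) = 0 := by rw [← hk, ← hcomm ψ hψ, hΦx, map_zero]
  rw [hk, hφfaithful k hφk, star_zero, zero_mul]

end Slice

section Coaction

variable {A H T2 T3 TH2 : Type*} [CStarAlgebra A] [CStarAlgebra H] [CStarAlgebra T2]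
  [CStarAlgebra T3] [CStarAlgebra TH2] {jA : A →⋆ₐ[ℂ] T2} {jH : H →⋆ₐ[ℂ] T2}
  {d₁ d₂ : H →⋆ₐ[ℂ] TH2} {k₁ : A →⋆ₐ[ℂ] T3} {k₂ k₃ : H →⋆ₐ[ℂ] T3}
  {m₁₂ : T2 →⋆ₐ[ℂ] T3} {m₂₃ : TH2 →⋆ₐ[ℂ] T3} {φ : H →L[ℂ] ℂ} {P₁ : TH2 →L[ℂ] H}
  {Φ : T2 →L[ℂ] A} {Φ₂ : T3 →L[ℂ] T2}

theorem slice₂_m₁₂_mul_k₃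
    (hjdense : closure
      (Submodule.span ℂ {t : T2 | ∃ (a : A) (h : H), t = jA a * jH h} : Set T2) = Set.univ)
    (hm₁₂ : ∀ (a : A) (h : H), m₁₂ (jA a * jH h) = k₁ a * k₂ h)
    (hΦ₂ : ∀ (a : A) (h h' : H), Φ₂ (k₁ a * k₂ h * k₃ h') = φ h' • (jA a * jH h))
    (h' : H) (t : T2) : Φ₂ (m₁₂ t * k₃ h') = φ h' • t := by
  refine LinearMap.eq_of_eqOn_of_closure_span_eq_univ hjdense
    (f := Φ₂.toLinearMap ∘ₗ LinearMap.mulRight ℂ (k₃ h') ∘ₗ (m₁₂ : T2 →ₗ[ℂ] T3))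
    (g := φ h' • LinearMap.id)
    (by fun_prop : Continuous fun t => Φ₂ (m₁₂ t * k₃ h'))
    (by fun_prop : Continuous fun t : T2 => φ h' • t) ?_ t
  rintro _ ⟨a, h, rfl⟩
  change Φ₂ (m₁₂ (jA a * jH h) * k₃ h') = φ h' • (jA a * jH h)
  rw [hm₁₂, hΦ₂]

theorem slice₂_k₁_mul_m₂₃
    (hddense : closure (Submodule.span ℂ {t : TH2 | ∃ x y : H, t = d₁ x * d₂ y} : Set TH2)
      = Set.univ)
    (hm₂₃ : ∀ h h' : H, m₂₃ (d₁ h * d₂ h') = k₂ h * k₃ h')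
    (hΦ₂ : ∀ (a : A) (h h' : H), Φ₂ (k₁ a * k₂ h * k₃ h') = φ h' • (jA a * jH h))
    (hP₁ : ∀ h h' : H, P₁ (d₁ h * d₂ h') = φ h' • h) (a : A) (s : TH2) :
    Φ₂ (k₁ a * m₂₃ s) = jA a * jH (P₁ s) := by
  refine LinearMap.eq_of_eqOn_of_closure_span_eq_univ hddense
    (f := Φ₂.toLinearMap ∘ₗ LinearMap.mulLeft ℂ (k₁ a) ∘ₗ (m₂₃ : TH2 →ₗ[ℂ] T3))
    (g := LinearMap.mulLeft ℂ (jA a) ∘ₗ (jH : H →ₗ[ℂ] T2) ∘ₗ P₁.toLinearMap)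
    (by fun_prop : Continuous fun s => Φ₂ (k₁ a * m₂₃ s))
    (by fun_prop : Continuous fun s => jA a * jH (P₁ s)) ?_ s
  rintro _ ⟨h, h', rfl⟩
  change Φ₂ (k₁ a * m₂₃ (d₁ h * d₂ h')) = jA a * jH (P₁ (d₁ h * d₂ h'))
  rw [hm₂₃, ← mul_assoc, hΦ₂, hP₁, map_smul, mul_smul_comm]

theorem slice₂_coaction_tensor_id {α : A →⋆ₐ[ℂ] T2} {β : T2 →⋆ₐ[ℂ] T3}
    (hjdense : closure
      (Submodule.span ℂ {t : T2 | ∃ (a : A) (h : H), t = jA a * jH h} : Set T2) = Set.univ)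
    (hm₁₂ : ∀ (a : A) (h : H), m₁₂ (jA a * jH h) = k₁ a * k₂ h)
    (hβ : ∀ (a : A) (h : H), β (jA a * jH h) = m₁₂ (α a) * k₃ h)
    (hΦ : ∀ (a : A) (h : H), Φ (jA a * jH h) = φ h • a)
    (hΦ₂ : ∀ (a : A) (h h' : H), Φ₂ (k₁ a * k₂ h * k₃ h') = φ h' • (jA a * jH h)) (t : T2) :
    Φ₂ (β t) = α (Φ t) := by
  refine LinearMap.eq_of_eqOn_of_closure_span_eq_univ hjdense
    (f := Φ₂.toLinearMap ∘ₗ (β : T2 →ₗ[ℂ] T3)) (g := (α : A →ₗ[ℂ] T2) ∘ₗ Φ.toLinearMap)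
    (by fun_prop : Continuous fun t => Φ₂ (β t)) (by fun_prop : Continuous fun t => α (Φ t))
    ?_ t
  rintro _ ⟨a, h, rfl⟩
  change Φ₂ (β (jA a * jH h)) = α (Φ (jA a * jH h))
  rw [hβ, slice₂_m₁₂_mul_k₃ hjdense hm₁₂ hΦ₂, hΦ, map_smul]

theorem slice₂_id_tensor_comul {δ : H →⋆ₐ[ℂ] TH2} {γ : T2 →⋆ₐ[ℂ] T3}
    (hjdense : closure
      (Submodule.span ℂ {t : T2 | ∃ (a : A) (h : H), t = jA a * jH h} : Set T2) = Set.univ)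
    (hddense : closure (Submodule.span ℂ {t : TH2 | ∃ x y : H, t = d₁ x * d₂ y} : Set TH2)
      = Set.univ)
    (hm₂₃ : ∀ h h' : H, m₂₃ (d₁ h * d₂ h') = k₂ h * k₃ h')
    (hγ : ∀ (a : A) (h : H), γ (jA a * jH h) = k₁ a * m₂₃ (δ h))
    (hP₁ : ∀ h h' : H, P₁ (d₁ h * d₂ h') = φ h' • h) (hHaar₁ : ∀ h : H, P₁ (δ h) = φ h • 1)
    (hΦ : ∀ (a : A) (h : H), Φ (jA a * jH h) = φ h • a)
    (hΦ₂ : ∀ (a : A) (h h' : H), Φ₂ (k₁ a * k₂ h * k₃ h') = φ h' • (jA a * jH h)) (t : T2) :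
    Φ₂ (γ t) = jA (Φ t) := by
  refine LinearMap.eq_of_eqOn_of_closure_span_eq_univ hjdense
    (f := Φ₂.toLinearMap ∘ₗ (γ : T2 →ₗ[ℂ] T3)) (g := (jA : A →ₗ[ℂ] T2) ∘ₗ Φ.toLinearMap)
    (by fun_prop : Continuous fun t => Φ₂ (γ t)) (by fun_prop : Continuous fun t => jA (Φ t))
    ?_ t
  rintro _ ⟨a, h, rfl⟩
  change Φ₂ (γ (jA a * jH h)) = jA (Φ (jA a * jH h))
  rw [hγ, slice₂_k₁_mul_m₂₃ hddense hm₂₃ hΦ₂ hP₁, hHaar₁, hΦ, map_smul, map_smul, map_one,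
    mul_smul_comm, mul_one]

end Coaction

theorem coaction_slice_faithful_conditional_expectation_general
    {A : Type*} [CStarAlgebra A] {H : Type*} [CStarAlgebra H]
    {TH2 : Type*} [CStarAlgebra TH2] {T2 : Type*} [CStarAlgebra T2]
    {T3 : Type*} [CStarAlgebra T3]
    -- H ⊗ H
    (d₁ d₂ : H →⋆ₐ[ℂ] TH2)
    (hddense : closure (Submodule.span ℂ {t : TH2 | ∃ x y : H, t = d₁ x * d₂ y} : Set TH2)
      = Set.univ)
    -- A ⊗ H
    (jA : A →⋆ₐ[ℂ] T2) (jH : H →⋆ₐ[ℂ] T2)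
    (hjcomm : ∀ (a : A) (h : H), Commute (jA a) (jH h))
    (hjdense : closure
      (Submodule.span ℂ {t : T2 | ∃ (a : A) (h : H), t = jA a * jH h} : Set T2)
      = Set.univ)
    -- A ⊗ H ⊗ H
    (k₁ : A →⋆ₐ[ℂ] T3) (k₂ k₃ : H →⋆ₐ[ℂ] T3)
    -- leg embeddings
    (m₁₂ : T2 →⋆ₐ[ℂ] T3) (hm₁₂ : ∀ (a : A) (h : H), m₁₂ (jA a * jH h) = k₁ a * k₂ h)
    (m₂₃ : TH2 →⋆ₐ[ℂ] T3) (hm₂₃ : ∀ h h' : H, m₂₃ (d₁ h * d₂ h') = k₂ h * k₃ h')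
    -- comultiplication and coaction
    (δ : H →⋆ₐ[ℂ] TH2) (α : A →⋆ₐ[ℂ] T2)
    (β : T2 →⋆ₐ[ℂ] T3) (hβ : ∀ (a : A) (h : H), β (jA a * jH h) = m₁₂ (α a) * k₃ h)
    (γ : T2 →⋆ₐ[ℂ] T3) (hγ : ∀ (a : A) (h : H), γ (jA a * jH h) = k₁ a * m₂₃ (δ h))
    (hcoact : ∀ a : A, β (α a) = γ (α a))
    -- the Haar state and its slice maps
    (φ : H →L[ℂ] ℂ) (hφ : IsState φ)
    (P₁ : TH2 →L[ℂ] H)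
    (hP₁ : ∀ h h' : H, P₁ (d₁ h * d₂ h') = φ h' • h)
    (hHaar₁ : ∀ h : H, P₁ (δ h) = φ h • 1)
    (Φ : T2 →L[ℂ] A) (hΦ : ∀ (a : A) (h : H), Φ (jA a * jH h) = φ h • a)
    (Φ₂ : T3 →L[ℂ] T2)
    (hΦ₂ : ∀ (a : A) (h h' : H), Φ₂ (k₁ a * k₂ h * k₃ h') = φ h' • (jA a * jH h))
    -- the Haar state is faithful
    (hφfaithful : ∀ h : H, φ (star h * h) = 0 → h = 0)
    -- the bounded counit
    (S : T2 →L[ℂ] A)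
    (hcounit : ∀ a : A, S (α a) = a)
    -- slice maps over states of `A`, witnessing minimality of the tensor norm on `T2`
    (R : (A →L[ℂ] ℂ) → T2 →L[ℂ] H)
    (hRform : ∀ ψ : A →L[ℂ] ℂ, IsState ψ → ∀ (a : A) (h : H), R ψ (jA a * jH h) = ψ a • h)
    (hRpos : ∀ ψ : A →L[ℂ] ℂ, IsState ψ → ∀ x : T2, IsPos x → IsPos (R ψ x))
    (hRsep : ∀ x : T2, IsPos x → (∀ ψ : A →L[ℂ] ℂ, IsState ψ → R ψ x = 0) → x = 0) :
    let E : A → A := fun a => Φ (α a)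
    (∀ a : A, IsPos a → E a = 0 → a = 0) ∧
    (∀ a : A, E (E a) = E a) ∧
    (∀ a : A, IsPos a → IsPos (E a)) ∧
    (∀ a : A, ‖E a‖ ≤ ‖a‖) ∧
    (∀ a : A, α (E a) = jA (E a)) ∧
    (∀ a : A, α a = jA a → E a = a) ∧
    (∀ a b c : A, α b = jA b → α c = jA c → E (b * a * c) = b * E a * c) := by
  intro E
  let := CStarAlgebra.spectralOrder A
  let := CStarAlgebra.spectralOrderedRing A
  have hΦpos := slice_star_mul_self_nonneg hφ.2 hjcomm hjdense hΦ
  let Eₚ : A →ₚ[ℂ] A := .ofStarMulSelfNonneg ((Φ : T2 →ₗ[ℂ] A) ∘ₗ (α : A →ₗ[ℂ] T2))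
    fun a => by simpa [map_star] using hΦpos (α a)
  have hfix : ∀ a, α (E a) = jA (E a) := fun a => by
    change α (Φ (α a)) = jA (Φ (α a))
    rw [← slice₂_coaction_tensor_id hjdense hm₁₂ hβ hΦ hΦ₂, hcoact,
      slice₂_id_tensor_comul hjdense hddense hm₂₃ hγ hP₁ hHaar₁ hΦ hΦ₂]
  have hE_of_fix : ∀ a, α a = jA a → E a = a := fun a ha => by
    simp only [E, ha, slice_jA hφ.1 hΦ]
  have hbimod : ∀ a b c, α b = jA b → α c = jA c → E (b * a * c) = b * E a * c := by
    intro a b c hb hc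
    simp only [E, map_mul, hb, hc, slice_jA_mul_mul_jA hjcomm hjdense hΦ]
  have hpos : ∀ a, IsPos a → IsPos (E a) := fun a ha =>
    CStarAlgebra.nonneg_iff_eq_star_mul_self.mp
      (Eₚ.map_nonneg (CStarAlgebra.nonneg_iff_eq_star_mul_self.mpr ha))
  refine ⟨fun a ha hEa => ?_, fun a => hE_of_fix _ (hfix a), hpos, fun a => ?_, hfix,
    hE_of_fix, hbimod⟩
  · have hαa : α a = 0 := eq_zero_of_isPos_of_slice_eq_zero hφfaithful hRpos hRsep
      (fun ψ hψ => apply_slice_comm hjdense hΦ (hRform ψ hψ)) (ha.map α) hEa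
    rw [← hcounit a, hαa, map_zero]
  · exact Eₚ.norm_apply_le_of_bimodule (B := StarAlgHom.equalizer α jA) hfix
      (hE_of_fix 1 (by simp)) (fun a b hb c hc => hbimod a b c hb hc) a

/-- If the Haar state `φ` of `H` is faithful and `α` is a coaction
of `H` on `A` with bounded counit condition `(id_A ⊗ ε) ∘ α = id_A`, then
`E = (id_A ⊗ φ) ∘ α` is a faithful conditional expectation from `A` onto the fixed-point
algebra `A^α = {a : α a = a ⊗ 1_H}` (in `T2 ≅ A ⊗ H`, the condition `α a = a ⊗ 1_H`
reads `α a = jA a`): `E` is faithful, idempotent, positive, contractive, has range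
exactly `A^α`, and is an `A^α`-bimodule map.

The minimal tensor product `T2 ≅ A ⊗_min H` is further equipped with the slice maps
`R ψ = ψ ⊗ id_H` over states `ψ` of `A`, which are positive and jointly faithful on
positive elements (this characterizes the spatial tensor norm).

Tensor products are presented by C⋆-algebras with commuting ⋆-homomorphic copies of the
factors with dense span: `T2 ≅ A ⊗ H` (via `jA, jH`), `TH2 ≅ H ⊗ H` (via `d₁, d₂`),
`T3 ≅ A ⊗ H ⊗ H` (via `k₁, k₂, k₃`), with leg embeddings `m₁₂, m₂₃`; `β = α ⊗ id_H`,
`γ = id_A ⊗ δ`; the slice maps `Φ = id_A ⊗ φ`, `Φ₂ = id_{A⊗H} ⊗ φ` and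
`P₁ = id_H ⊗ φ`, `P₂ = φ ⊗ id_H` are continuous linear maps determined on elementary
tensors, and `φ` is the Haar state: `(φ ⊗ id) ∘ δ = (id ⊗ φ) ∘ δ = φ(·)·1`. -/
theorem coaction_slice_faithful_conditional_expectation
    {A : Type*} [CStarAlgebra A] {H : Type*} [CStarAlgebra H]
    {TH2 : Type*} [CStarAlgebra TH2] {T2 : Type*} [CStarAlgebra T2]
    {T3 : Type*} [CStarAlgebra T3]
    -- H ⊗ H
    (d₁ d₂ : H →⋆ₐ[ℂ] TH2)
    (hdcomm : ∀ x y : H, Commute (d₁ x) (d₂ y))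
    (hddense : closure (Submodule.span ℂ {t : TH2 | ∃ x y : H, t = d₁ x * d₂ y} : Set TH2)
      = Set.univ)
    -- A ⊗ H
    (jA : A →⋆ₐ[ℂ] T2) (jH : H →⋆ₐ[ℂ] T2)
    (hjcomm : ∀ (a : A) (h : H), Commute (jA a) (jH h))
    (hjdense : closure
      (Submodule.span ℂ {t : T2 | ∃ (a : A) (h : H), t = jA a * jH h} : Set T2)
      = Set.univ)
    -- A ⊗ H ⊗ H
    (k₁ : A →⋆ₐ[ℂ] T3) (k₂ k₃ : H →⋆ₐ[ℂ] T3)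
    (hkcomm12 : ∀ (a : A) (h : H), Commute (k₁ a) (k₂ h))
    (hkcomm13 : ∀ (a : A) (h : H), Commute (k₁ a) (k₃ h))
    (hkcomm23 : ∀ (h h' : H), Commute (k₂ h) (k₃ h'))
    (hkdense : closure (Submodule.span ℂ
      {t : T3 | ∃ (a : A) (h h' : H), t = k₁ a * k₂ h * k₃ h'} : Set T3) = Set.univ)
    -- leg embeddings
    (m₁₂ : T2 →⋆ₐ[ℂ] T3) (hm₁₂ : ∀ (a : A) (h : H), m₁₂ (jA a * jH h) = k₁ a * k₂ h)
    (m₂₃ : TH2 →⋆ₐ[ℂ] T3) (hm₂₃ : ∀ h h' : H, m₂₃ (d₁ h * d₂ h') = k₂ h * k₃ h')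
    -- comultiplication and coaction
    (δ : H →⋆ₐ[ℂ] TH2) (α : A →⋆ₐ[ℂ] T2)
    (β : T2 →⋆ₐ[ℂ] T3) (hβ : ∀ (a : A) (h : H), β (jA a * jH h) = m₁₂ (α a) * k₃ h)
    (γ : T2 →⋆ₐ[ℂ] T3) (hγ : ∀ (a : A) (h : H), γ (jA a * jH h) = k₁ a * m₂₃ (δ h))
    (hcoact : ∀ a : A, β (α a) = γ (α a))
    -- the Haar state and its slice maps
    (φ : H →L[ℂ] ℂ) (hφ : IsState φ)
    (P₁ P₂ : TH2 →L[ℂ] H)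
    (hP₁ : ∀ h h' : H, P₁ (d₁ h * d₂ h') = φ h' • h)
    (hP₂ : ∀ h h' : H, P₂ (d₁ h * d₂ h') = φ h • h')
    (hHaar₁ : ∀ h : H, P₁ (δ h) = φ h • 1)
    (hHaar₂ : ∀ h : H, P₂ (δ h) = φ h • 1)
    (Φ : T2 →L[ℂ] A) (hΦ : ∀ (a : A) (h : H), Φ (jA a * jH h) = φ h • a)
    (Φ₂ : T3 →L[ℂ] T2)
    (hΦ₂ : ∀ (a : A) (h h' : H), Φ₂ (k₁ a * k₂ h * k₃ h') = φ h' • (jA a * jH h))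
    -- the Haar state is faithful
    (hφfaithful : ∀ h : H, φ (star h * h) = 0 → h = 0)
    -- the bounded counit
    (ε : H →⋆ₐ[ℂ] ℂ)
    (S : T2 →L[ℂ] A) (hS : ∀ (a : A) (h : H), S (jA a * jH h) = ε h • a)
    (hcounit : ∀ a : A, S (α a) = a)
    -- slice maps over states of `A`, witnessing minimality of the tensor norm on `T2`
    (R : (A →L[ℂ] ℂ) → T2 →L[ℂ] H)
    (hRform : ∀ ψ : A →L[ℂ] ℂ, IsState ψ → ∀ (a : A) (h : H), R ψ (jA a * jH h) = ψ a • h)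
    (hRpos : ∀ ψ : A →L[ℂ] ℂ, IsState ψ → ∀ x : T2, IsPos x → IsPos (R ψ x))
    (hRsep : ∀ x : T2, IsPos x → (∀ ψ : A →L[ℂ] ℂ, IsState ψ → R ψ x = 0) → x = 0) :
    let E : A → A := fun a => Φ (α a)
    (∀ a : A, IsPos a → E a = 0 → a = 0) ∧
    (∀ a : A, E (E a) = E a) ∧
    (∀ a : A, IsPos a → IsPos (E a)) ∧
    (∀ a : A, ‖E a‖ ≤ ‖a‖) ∧
    (∀ a : A, α (E a) = jA (E a)) ∧
    (∀ a : A, α a = jA a → E a = a) ∧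
    (∀ a b c : A, α b = jA b → α c = jA c → E (b * a * c) = b * E a * c) :=
  coaction_slice_faithful_conditional_expectation_general d₁ d₂ hddense jA jH hjcomm hjdense k₁ k₂
    k₃ m₁₂ hm₁₂ m₂₃ hm₂₃ δ α β hβ γ hγ hcoact φ hφ P₁ hP₁ hHaar₁ Φ hΦ Φ₂ hΦ₂ hφfaithful S hcounit R
    hRform hRpos hRsep
end

section
/- Let B, A, H be C*-algebras. The identity map on the algebraic tensor product B ⊙ A ⊙ H extends to a *-homomorphism ρ : B ⊗_max (A ⊗_min H) → (B ⊗_max A) ⊗_min H. -/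
universe u

open scoped TensorProduct

/-- A C⋆-completion of the algebraic tensor product `B ⊙ A` of two unital C⋆-algebras:
a C⋆-algebra `T` together with commuting unital ⋆-homomorphisms `jB : B → T`,
`jA : A → T` such that the induced algebra homomorphism `B ⊗[ℂ] A → T` is injective
with dense range.  Such data correspond exactly to C⋆-norms on `B ⊙ A`. -/
structure IsCStarCompletion {B A T : Type u} [CStarAlgebra B] [CStarAlgebra A]
    [CStarAlgebra T] (jB : B →⋆ₐ[ℂ] T) (jA : A →⋆ₐ[ℂ] T) : Prop where
  commute : ∀ (b : B) (a : A), Commute (jB b) (jA a)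
  inj : Function.Injective
    (Algebra.TensorProduct.lift jB.toAlgHom jA.toAlgHom commute)
  dense : Dense
    (Set.range (Algebra.TensorProduct.lift jB.toAlgHom jA.toAlgHom commute) : Set T)

/-- A C⋆-algebra `A` is nuclear if for every C⋆-algebra `B` the maximal and minimal
C⋆-norms on `B ⊙ A` coincide; equivalently (as formalized here), there is a unique
C⋆-norm on `B ⊙ A`: any two C⋆-completions of `B ⊙ A` are isomorphic via a
⋆-isomorphism compatible with the canonical embeddings. -/
def IsNuclear (A : Type u) [CStarAlgebra A] : Prop :=
  ∀ (B : Type u) [CStarAlgebra B] (T₁ T₂ : Type u) [CStarAlgebra T₁] [CStarAlgebra T₂]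
    (jB₁ : B →⋆ₐ[ℂ] T₁) (jA₁ : A →⋆ₐ[ℂ] T₁) (jB₂ : B →⋆ₐ[ℂ] T₂) (jA₂ : A →⋆ₐ[ℂ] T₂),
    IsCStarCompletion jB₁ jA₁ → IsCStarCompletion jB₂ jA₂ →
    ∃ Θ : T₁ ≃⋆ₐ[ℂ] T₂, ∀ (b : B) (a : A), Θ (jB₁ b * jA₁ a) = jB₂ b * jA₂ a

/-- A C⋆-completion of `B ⊙ A` is *maximal* (i.e. realizes the maximal C⋆-norm) if it
has the universal property: every pair of commuting unital ⋆-homomorphisms of `B` and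
`A` into a C⋆-algebra `D` factors through it. -/
structure IsMaxCStarCompletion {B A T : Type u} [CStarAlgebra B] [CStarAlgebra A]
    [CStarAlgebra T] (jB : B →⋆ₐ[ℂ] T) (jA : A →⋆ₐ[ℂ] T) extends
    IsCStarCompletion jB jA : Prop where
  universal : ∀ (D : Type u) [CStarAlgebra D] (f : B →⋆ₐ[ℂ] D) (g : A →⋆ₐ[ℂ] D),
    (∀ (b : B) (a : A), Commute (f b) (g a)) →
    ∃ h : T →⋆ₐ[ℂ] D, (∀ b : B, h (jB b) = f b) ∧ ∀ a : A, h (jA a) = g a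

open scoped ComplexOrder

/-- A C⋆-completion realizes the *minimal* (spatial) C⋆-norm iff it carries slice maps
`R ψ = ψ ⊗ id` over all states `ψ` of the first factor which are positive and jointly
faithful on positive elements. -/
structure IsMinCStarCompletion {B A T : Type u} [CStarAlgebra B] [CStarAlgebra A]
    [CStarAlgebra T] (jB : B →⋆ₐ[ℂ] T) (jA : A →⋆ₐ[ℂ] T) extends
    IsCStarCompletion jB jA : Prop where
  slices : ∃ R : (B →L[ℂ] ℂ) → T →L[ℂ] A,
    (∀ ψ : B →L[ℂ] ℂ, IsState ψ → ∀ (b : B) (a : A), R ψ (jB b * jA a) = ψ b • a) ∧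
    (∀ ψ : B →L[ℂ] ℂ, IsState ψ → ∀ x : T, IsPos x → IsPos (R ψ x)) ∧
    (∀ x : T, IsPos x → (∀ ψ : B →L[ℂ] ℂ, IsState ψ → R ψ x = 0) → x = 0)

set_option maxHeartbeats 1000000 in
lemma min_comparison {A H T T' : Type u} [CStarAlgebra A] [CStarAlgebra H]
    [CStarAlgebra T] [CStarAlgebra T']
    (jA : A →⋆ₐ[ℂ] T) (jH : H →⋆ₐ[ℂ] T) (hmin : IsMinCStarCompletion jA jH)
    (f : A →⋆ₐ[ℂ] T') (g : H →⋆ₐ[ℂ] T') (hc : ∀ (a : A) (h : H), Commute (f a) (g h))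
    (hfaith : ∀ x : T', IsPos x →
      (∀ (R' : T' →L[ℂ] H) (ψ : A →L[ℂ] ℂ), IsState ψ →
        (∀ (a : A) (h : H), R' (f a * g h) = ψ a • h) → R' x = 0) → x = 0) :
    ∃ G : T →⋆ₐ[ℂ] T', (∀ (a : A) (h : H), G (jA a * jH h) = f a * g h) ∧
      ∀ c : T', (∀ a : A, Commute c (f a)) → (∀ h : H, Commute c (g h)) →
        ∀ t : T, Commute c (G t) := by
  classical
  obtain ⟨R1, hR1, -, -⟩ := hmin.slices
  set JA : A →⋆ₐ[ℂ] (T × T') := jA.prod f with hJA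
  set JH : H →⋆ₐ[ℂ] (T × T') := jH.prod g with hJH
  have commJ : ∀ (a : A) (h : H), Commute (JA a) (JH h) := by
    intro a h
    have h1 := hmin.commute a h
    have h2 := hc a h
    simp only [Commute, SemiconjBy, hJA, hJH, StarAlgHom.prod_apply, Pi.prod,
      Prod.mk_mul_mk, Prod.mk.injEq]
    exact ⟨h1, h2⟩
  set L : A ⊗[ℂ] H →ₐ[ℂ] T :=
    Algebra.TensorProduct.lift jA.toAlgHom jH.toAlgHom hmin.commute with hL
  set L' : A ⊗[ℂ] H →ₐ[ℂ] T' :=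
    Algebra.TensorProduct.lift f.toAlgHom g.toAlgHom hc with hL'
  set L2 : A ⊗[ℂ] H →ₐ[ℂ] (T × T') :=
    Algebra.TensorProduct.lift JA.toAlgHom JH.toAlgHom commJ with hL2
  have hfst : ∀ z : A ⊗[ℂ] H, (L2 z).1 = L z := by
    intro z
    induction z using TensorProduct.induction_on with
    | zero => simp
    | tmul a h => simp [hL2, hL, Algebra.TensorProduct.lift_tmul, hJA, hJH]
    | add x y hx hy => simp [map_add, hx, hy]
  have hsnd : ∀ z : A ⊗[ℂ] H, (L2 z).2 = L' z := by
    intro z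
    induction z using TensorProduct.induction_on with
    | zero => simp
    | tmul a h => simp [hL2, hL', Algebra.TensorProduct.lift_tmul, hJA, hJH]
    | add x y hx hy => simp [map_add, hx, hy]
  -- the star subalgebra given by the range of L2
  have starmem : ∀ {x : T × T'}, x ∈ L2.range → star x ∈ L2.range := by
    rintro x ⟨z, rfl⟩
    suffices hz : ∀ z : A ⊗[ℂ] H, ∃ w, L2 w = star (L2 z) from hz z
    intro z
    induction z using TensorProduct.induction_on with
    | zero => exact ⟨0, by simp⟩
    | tmul a h =>
      refine ⟨star a ⊗ₜ star h, ?_⟩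
      rw [Algebra.TensorProduct.lift_tmul, Algebra.TensorProduct.lift_tmul]
      simp only [StarAlgHom.coe_toAlgHom]
      rw [star_mul, ← map_star JA, ← map_star JH, (commJ _ _).eq]
    | add x y hx hy =>
      obtain ⟨w1, hw1⟩ := hx; obtain ⟨w2, hw2⟩ := hy
      exact ⟨w1 + w2, by simp [map_add, hw1, hw2, star_add]⟩
  set Sc : StarSubalgebra ℂ (T × T') :=
    { toSubalgebra := L2.range, star_mem' := starmem } with hSc
  set S : StarSubalgebra ℂ (T × T') := Sc.topologicalClosure with hS
  letI : CStarAlgebra S := {}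
  set π : S →⋆ₐ[ℂ] T := (StarAlgHom.fst ℂ T T').comp S.subtype with hπdef
  have hπ : ∀ x : S, π x = (x : T × T').1 := fun _ => rfl
  -- key: slices agree on S
  have hkey : ∀ (R' : T' →L[ℂ] H) (ψ : A →L[ℂ] ℂ), IsState ψ →
      (∀ (a : A) (h : H), R' (f a * g h) = ψ a • h) →
      ∀ y ∈ (S : Set (T × T')), R' y.2 = R1 ψ y.1 := by
    intro R' ψ hψ hform y hy
    have hclosed : IsClosed {y : T × T' | R' y.2 = R1 ψ y.1} :=
      isClosed_eq (R'.continuous.comp continuous_snd)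
        ((R1 ψ).continuous.comp continuous_fst)
    have hsub : (Sc : Set (T × T')) ⊆ {y : T × T' | R' y.2 = R1 ψ y.1} := by
      rintro y ⟨z, rfl⟩
      show R' (L2 z).2 = R1 ψ (L2 z).1
      rw [hfst, hsnd]
      induction z using TensorProduct.induction_on with
      | zero => simp
      | tmul a h =>
        rw [Algebra.TensorProduct.lift_tmul, Algebra.TensorProduct.lift_tmul]
        simp only [StarAlgHom.coe_toAlgHom]
        rw [hform, hR1 ψ hψ]
      | add x y hx hy => simp [map_add, hx, hy]
    have : (S : Set (T × T')) ⊆ {y : T × T' | R' y.2 = R1 ψ y.1} := by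
      rw [hS, StarSubalgebra.topologicalClosure_coe]
      exact closure_minimal hsub hclosed
    exact this hy
  -- injectivity of π
  have hker : ∀ x : S, π x = 0 → x = 0 := by
    intro x hx0
    have h1 : (x : T × T').1 = 0 := hx0
    set p : S := star x * x with hp
    have hp1 : (p : T × T').1 = 0 := by
      show (star (x : T × T') * (x : T × T')).1 = 0
      rw [Prod.fst_mul]
      simp [Prod.fst_star, h1]
    have hp2 : (p : T × T').2 = 0 := by
      have hpval : (p : T × T').2 = star (x : T × T').2 * (x : T × T').2 := by
        show (star (x : T × T') * (x : T × T')).2 = _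
        rw [Prod.snd_mul]; simp [Prod.snd_star]
      refine hfaith _ ⟨(x : T × T').2, hpval⟩ ?_
      intro R' ψ hψ hform
      rw [hkey R' ψ hψ hform (p : T × T') p.2, hp1, map_zero]
    have hpz : p = 0 := by
      apply Subtype.ext
      rw [Prod.ext_iff]
      exact ⟨hp1, hp2⟩
    have hnx : ‖x‖ * ‖x‖ = 0 := by
      rw [← CStarRing.norm_star_mul_self, ← hp, hpz, norm_zero]
    have : ‖x‖ = 0 := by nlinarith [norm_nonneg x]
    exact norm_eq_zero.mp this
  have hinj : Function.Injective π := by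
    intro x y hxy
    have : π (x - y) = 0 := by rw [map_sub, hxy, sub_self]
    have := hker _ this
    rwa [sub_eq_zero] at this
  have hiso : Isometry π := NonUnitalStarAlgHom.isometry π hinj
  have hmemS : ∀ z : A ⊗[ℂ] H, L2 z ∈ S := fun z =>
    Sc.le_topologicalClosure ⟨z, rfl⟩
  have hsurj : Function.Surjective π := by
    have hclosedrange : IsClosed (Set.range π) := hiso.isClosedEmbedding.isClosed_range
    have hsubrange : Set.range L ⊆ Set.range π := by
      rintro t ⟨z, rfl⟩
      exact ⟨⟨L2 z, hmemS z⟩, hfst z⟩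
    have hdense : Dense (Set.range π) := hmin.dense.mono hsubrange
    intro t
    have ht : t ∈ closure (Set.range π) := hdense t
    rwa [hclosedrange.closure_eq] at ht
  set e : S ≃ T := Equiv.ofBijective π ⟨hinj, hsurj⟩ with he
  have hes : ∀ t : T, π (e.symm t) = t := fun t => e.apply_symm_apply t
  have hse : ∀ x : S, e.symm (π x) = x := fun x => e.symm_apply_apply x
  set Gf : T → T' := fun t => ((e.symm t : S) : T × T').2 with hGf
  have hsymm_mul : ∀ t₁ t₂ : T, e.symm (t₁ * t₂) = e.symm t₁ * e.symm t₂ := by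
    intro t₁ t₂; apply hinj
    rw [hes, map_mul π (e.symm t₁) (e.symm t₂), hes, hes]
  have hsymm_add : ∀ t₁ t₂ : T, e.symm (t₁ + t₂) = e.symm t₁ + e.symm t₂ := by
    intro t₁ t₂; apply hinj
    rw [hes, map_add π (e.symm t₁) (e.symm t₂), hes, hes]
  have hsymm_one : e.symm 1 = 1 := by apply hinj; rw [hes, map_one π]
  have hsymm_zero : e.symm 0 = 0 := by apply hinj; rw [hes, map_zero π]
  have hsymm_star : ∀ t : T, e.symm (star t) = star (e.symm t) := by
    intro t; apply hinj; rw [hes, map_star π (e.symm t), hes]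
  have hsymm_alg : ∀ r : ℂ, e.symm (algebraMap ℂ T r) = algebraMap ℂ S r := by
    intro r; apply hinj; rw [hes, AlgHomClass.commutes π r]
  set G : T →⋆ₐ[ℂ] T' :=
    { toFun := Gf
      map_one' := by
        show ((e.symm 1 : S) : T × T').2 = 1
        rw [hsymm_one]; rfl
      map_mul' := by
        intro t₁ t₂
        simp only [hGf, hsymm_mul]
        show ((e.symm t₁ * e.symm t₂ : S) : T × T').2 = _
        rw [MulMemClass.coe_mul, Prod.snd_mul]
      map_zero' := by
        show ((e.symm 0 : S) : T × T').2 = 0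
        rw [hsymm_zero]; rfl
      map_add' := by
        intro t₁ t₂
        simp only [hGf, hsymm_add]
        show ((e.symm t₁ + e.symm t₂ : S) : T × T').2 = _
        rw [AddMemClass.coe_add, Prod.snd_add]
      commutes' := by
        intro r
        simp only [hGf, hsymm_alg]
        show ((algebraMap ℂ S r : S) : T × T').2 = _
        simp [Algebra.algebraMap_eq_smul_one]
      map_star' := by
        intro t
        simp only [hGf, hsymm_star]
        show ((star (e.symm t) : S) : T × T').2 = _
        rw [StarMemClass.coe_star, Prod.snd_star] } with hG
  have hGapp : ∀ (a : A) (h : H), G (jA a * jH h) = f a * g h := by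
    intro a h
    have hw : π ⟨L2 (a ⊗ₜ h), hmemS _⟩ = jA a * jH h := by
      show (L2 (a ⊗ₜ h)).1 = _
      rw [hfst, hL, Algebra.TensorProduct.lift_tmul]
      rfl
    show Gf (jA a * jH h) = f a * g h
    rw [hGf, ← hw]
    show ((e.symm (π ⟨L2 (a ⊗ₜ[ℂ] h), hmemS _⟩) : S) : T × T').2 = f a * g h
    rw [hse]
    show (L2 (a ⊗ₜ h)).2 = _
    rw [hsnd, hL', Algebra.TensorProduct.lift_tmul]
    rfl
  refine ⟨G, hGapp, ?_⟩
  intro c hcf hcg t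
  have hall : ∀ y ∈ (S : Set (T × T')), Commute c y.2 := by
    have hclosed : IsClosed {y : T × T' | c * y.2 = y.2 * c} :=
      isClosed_eq (continuous_const.mul continuous_snd)
        (continuous_snd.mul continuous_const)
    have hsub : (Sc : Set (T × T')) ⊆ {y : T × T' | c * y.2 = y.2 * c} := by
      rintro y ⟨z, rfl⟩
      show Commute c (L2 z).2
      rw [hsnd]
      induction z using TensorProduct.induction_on with
      | zero => simp [Commute.zero_right]
      | tmul a h =>
        rw [Algebra.TensorProduct.lift_tmul]
        exact ((hcf a).mul_right (hcg h))
      | add x y hx hy =>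
        rw [map_add]
        exact hx.add_right hy
    intro y hy
    have : (S : Set (T × T')) ⊆ {y : T × T' | c * y.2 = y.2 * c} := by
      rw [hS, StarSubalgebra.topologicalClosure_coe]
      exact closure_minimal hsub hclosed
    exact this hy
  exact hall ((e.symm t : S) : T × T') (e.symm t).2

/-- Let `B`, `A`, `H` be C⋆-algebras.  The identity map on the
algebraic tensor product `B ⊙ A ⊙ H` extends to a ⋆-homomorphism
`ρ : B ⊗_max (A ⊗_min H) → (B ⊗_max A) ⊗_min H`.

Here `TAH ≅ A ⊗_min H` (via `jA, jH`), `Tmax ≅ B ⊗_max (A ⊗_min H)` (via `iB, iAH`),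
`TBA ≅ B ⊗_max A` (via `mB, mA`) and `T3 ≅ (B ⊗_max A) ⊗_min H` (via `kBA, kH`). -/
theorem max_min_tensor_interchange_hom
    {B A H : Type u} [CStarAlgebra B] [CStarAlgebra A] [CStarAlgebra H]
    {TAH : Type u} [CStarAlgebra TAH]
    (jA : A →⋆ₐ[ℂ] TAH) (jH : H →⋆ₐ[ℂ] TAH)
    (hmin1 : IsMinCStarCompletion jA jH)
    {Tmax : Type u} [CStarAlgebra Tmax]
    (iB : B →⋆ₐ[ℂ] Tmax) (iAH : TAH →⋆ₐ[ℂ] Tmax)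
    (hmax1 : IsMaxCStarCompletion iB iAH)
    {TBA : Type u} [CStarAlgebra TBA]
    (mB : B →⋆ₐ[ℂ] TBA) (mA : A →⋆ₐ[ℂ] TBA)
    (hmax2 : IsMaxCStarCompletion mB mA)
    {T3 : Type u} [CStarAlgebra T3]
    (kBA : TBA →⋆ₐ[ℂ] T3) (kH : H →⋆ₐ[ℂ] T3)
    (hmin2 : IsMinCStarCompletion kBA kH) :
    ∃ ρ : Tmax →⋆ₐ[ℂ] T3, ∀ (b : B) (a : A) (h : H),
      ρ (iB b * iAH (jA a * jH h)) = kBA (mB b * mA a) * kH h := by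
  classical
  obtain ⟨R2, hR2, -, hR2faith⟩ := hmin2.slices
  set mACLM : A →L[ℂ] TBA := LinearMap.mkContinuous mA.toAlgHom.toLinearMap 1
    (fun a => by simpa using NonUnitalStarAlgHom.norm_apply_le mA a) with hmACLM
  have hfaith : ∀ x : T3, IsPos x →
      (∀ (R' : T3 →L[ℂ] H) (ψ : A →L[ℂ] ℂ), IsState ψ →
        (∀ (a : A) (h : H), R' ((kBA.comp mA) a * kH h) = ψ a • h) → R' x = 0) → x = 0 := by
    intro x hx hR'
    apply hR2faith x hx
    intro φ hφ
    have hψ : IsState (φ.comp mACLM) := by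
      refine ⟨?_, ?_⟩
      · show φ (mACLM 1) = 1
        have h1 : mACLM (1 : A) = (1 : TBA) := map_one mA
        rw [h1, hφ.1]
      · intro a
        show 0 ≤ φ (mACLM (star a * a))
        have h2 : mACLM (star a * a) = star (mA a) * mA a := by
          show mA (star a * a) = _
          rw [map_mul, map_star]
        rw [h2]
        exact hφ.2 (mA a)
    apply hR' (R2 φ) (φ.comp mACLM) hψ
    intro a h
    show R2 φ (kBA (mA a) * kH h) = φ (mACLM a) • h
    exact hR2 φ hφ (mA a) h
  obtain ⟨G, hG1, hG2⟩ := min_comparison jA jH hmin1 (kBA.comp mA) kH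
    (fun a h => hmin2.commute (mA a) h) hfaith
  have hcomm : ∀ (b : B) (t : TAH), Commute ((kBA.comp mB) b) (G t) := by
    intro b t
    refine hG2 (kBA (mB b)) (fun a => ?_) (fun h => hmin2.commute (mB b) h) t
    show kBA (mB b) * kBA (mA a) = kBA (mA a) * kBA (mB b)
    rw [← map_mul, ← map_mul, (hmax2.commute b a).eq]
  obtain ⟨ρ, hρ1, hρ2⟩ := hmax1.universal T3 (kBA.comp mB) G hcomm
  refine ⟨ρ, fun b a h => ?_⟩
  rw [map_mul, hρ1 b, hρ2 (jA a * jH h), hG1 a h]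
  show kBA (mB b) * (kBA (mA a) * kH h) = kBA (mB b * mA a) * kH h
  rw [map_mul kBA, mul_assoc]
end

section
/- Let α be a coaction of a compact quantum group H (with bounded counit ε) on a C*-algebra A, and B any C*-algebra. Then α̃ = ρ ∘ (id_B ⊗_max α) : B ⊗_max A → (B ⊗_max A) ⊗_min H is a coaction of H on B ⊗_max A: it satisfies (α̃ ⊗ id_H)∘α̃ = (id ⊗ δ)∘α̃ and (id_{B⊗_max A} ⊗ ε)∘α̃ = id. -/
open scoped CStarAlgebra

noncomputable def StarAlgHomCLM {X Y : Type*} [CStarAlgebra X] [CStarAlgebra Y]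
    (φ : X →⋆ₐ[ℂ] Y) : X →L[ℂ] Y :=
  ⟨φ.toAlgHom.toLinearMap, map_continuous φ⟩

@[simp] lemma StarAlgHomCLM_apply {X Y : Type*} [CStarAlgebra X] [CStarAlgebra Y]
    (φ : X →⋆ₐ[ℂ] Y) (x : X) : StarAlgHomCLM φ x = φ x := rfl

lemma dense_ext {X Y : Type*} [NormedAddCommGroup X] [NormedSpace ℂ X]
    [NormedAddCommGroup Y] [NormedSpace ℂ Y] {s : Set X}
    (hs : closure (Submodule.span ℂ s : Set X) = Set.univ)
    (f g : X →L[ℂ] Y) (h : ∀ x ∈ s, f x = g x) (x : X) : f x = g x := by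
  have h1 : (Submodule.span ℂ s : Set X) ⊆ {x | f x = g x} :=
    (Submodule.span_le (p := LinearMap.eqLocus (f : X →ₗ[ℂ] Y) (g : X →ₗ[ℂ] Y))).mpr h
  have h2 : closure (Submodule.span ℂ s : Set X) ⊆ {x | f x = g x} :=
    closure_minimal h1 (isClosed_eq f.continuous g.continuous)
  exact h2 (by rw [hs]; trivial)


/-- Let `α` be a coaction of a compact quantum group `H` (with
comultiplication `δ` and bounded counit `ε`) on a C⋆-algebra `A`, and `B` any
C⋆-algebra.  Then `α̃ = ρ ∘ (id_B ⊗_max α) : B ⊗_max A → (B ⊗_max A) ⊗_min H` is a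
coaction of `H` on `B ⊗_max A`: it satisfies `(α̃ ⊗ id_H) ∘ α̃ = (id ⊗ δ) ∘ α̃` and
`(id_{B ⊗_max A} ⊗ ε) ∘ α̃ = id`.

Tensor products are presented by C⋆-algebras with commuting ⋆-homomorphic copies of the
factors having dense span: `T2 ≅ A ⊗_min H` (via `jA, jH`), `TH2 ≅ H ⊗_min H` (via
`d₁, d₂`), `T3 ≅ A ⊗ H ⊗ H` (via `k₁, k₂, k₃`, with leg embeddings `m₁₂, m₂₃`),
`TBA ≅ B ⊗_max A` (via `mB, mA`), `TBAH ≅ (B ⊗_max A) ⊗_min H` (via `kBA, kH2`) and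
`TBAHH ≅ (B ⊗_max A) ⊗ H ⊗ H` (via `l, lH1, lH2`, with leg embeddings `ι₁₂`, `w` and
`τ`); `μ` embeds `A ⊗_min H` into the last two legs...—more precisely into the `(A,H)`
legs—of `TBAH`, `α̃` is the map `αt` determined by `αt (b ⊗ a) = (b ⊗ 1) · μ (α a)`,
`β' = α̃ ⊗ id_H`, `γ' = id ⊗ δ`, and `S = id ⊗ ε` is the counit slice map. -/
theorem lifted_coaction_is_coaction
    {A : Type*} [CStarAlgebra A] {H : Type*} [CStarAlgebra H] {B : Type*} [CStarAlgebra B]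
    {TH2 : Type*} [CStarAlgebra TH2] {T2 : Type*} [CStarAlgebra T2]
    {T3 : Type*} [CStarAlgebra T3] {TBA : Type*} [CStarAlgebra TBA]
    {TBAH : Type*} [CStarAlgebra TBAH] {TBAHH : Type*} [CStarAlgebra TBAHH]
    -- H ⊗ H
    (d₁ d₂ : H →⋆ₐ[ℂ] TH2)
    (hdcomm : ∀ x y : H, Commute (d₁ x) (d₂ y))
    (hddense : closure (Submodule.span ℂ {t : TH2 | ∃ x y : H, t = d₁ x * d₂ y} : Set TH2)
      = Set.univ)
    -- A ⊗ H
    (jA : A →⋆ₐ[ℂ] T2) (jH : H →⋆ₐ[ℂ] T2)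
    (hjcomm : ∀ (a : A) (h : H), Commute (jA a) (jH h))
    (hjdense : closure
      (Submodule.span ℂ {t : T2 | ∃ (a : A) (h : H), t = jA a * jH h} : Set T2)
      = Set.univ)
    -- A ⊗ H ⊗ H
    (k₁ : A →⋆ₐ[ℂ] T3) (k₂ k₃ : H →⋆ₐ[ℂ] T3)
    (hkcomm12 : ∀ (a : A) (h : H), Commute (k₁ a) (k₂ h))
    (hkcomm13 : ∀ (a : A) (h : H), Commute (k₁ a) (k₃ h))
    (hkcomm23 : ∀ (h h' : H), Commute (k₂ h) (k₃ h'))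
    (hkdense : closure (Submodule.span ℂ
      {t : T3 | ∃ (a : A) (h h' : H), t = k₁ a * k₂ h * k₃ h'} : Set T3) = Set.univ)
    (m₁₂ : T2 →⋆ₐ[ℂ] T3) (hm₁₂ : ∀ (a : A) (h : H), m₁₂ (jA a * jH h) = k₁ a * k₂ h)
    (m₂₃ : TH2 →⋆ₐ[ℂ] T3) (hm₂₃ : ∀ h h' : H, m₂₃ (d₁ h * d₂ h') = k₂ h * k₃ h')
    -- comultiplication, coaction and counit on the original data
    (δ : H →⋆ₐ[ℂ] TH2) (α : A →⋆ₐ[ℂ] T2)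
    (β : T2 →⋆ₐ[ℂ] T3) (hβ : ∀ (a : A) (h : H), β (jA a * jH h) = m₁₂ (α a) * k₃ h)
    (γ : T2 →⋆ₐ[ℂ] T3) (hγ : ∀ (a : A) (h : H), γ (jA a * jH h) = k₁ a * m₂₃ (δ h))
    (hcoact : ∀ a : A, β (α a) = γ (α a))
    (ε : H →⋆ₐ[ℂ] ℂ)
    (Sc : T2 →L[ℂ] A) (hSc : ∀ (a : A) (h : H), Sc (jA a * jH h) = ε h • a)
    (hcounit : ∀ a : A, Sc (α a) = a)
    -- B ⊗_max A, with its universal property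
    (mB : B →⋆ₐ[ℂ] TBA) (mA : A →⋆ₐ[ℂ] TBA)
    (hmcomm : ∀ (b : B) (a : A), Commute (mB b) (mA a))
    (hmdense : closure
      (Submodule.span ℂ {t : TBA | ∃ (b : B) (a : A), t = mB b * mA a} : Set TBA)
      = Set.univ)
    (huniv : ∀ (D : Type*) [CStarAlgebra D] (f : B →⋆ₐ[ℂ] D) (g : A →⋆ₐ[ℂ] D),
      (∀ (b : B) (a : A), Commute (f b) (g a)) →
      ∃ h : TBA →⋆ₐ[ℂ] D, (∀ b : B, h (mB b) = f b) ∧ ∀ a : A, h (mA a) = g a)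
    -- (B ⊗_max A) ⊗ H
    (kBA : TBA →⋆ₐ[ℂ] TBAH) (kH2 : H →⋆ₐ[ℂ] TBAH)
    (hkBAcomm : ∀ (x : TBA) (h : H), Commute (kBA x) (kH2 h))
    (hkBAdense : closure (Submodule.span ℂ
      {t : TBAH | ∃ (x : TBA) (h : H), t = kBA x * kH2 h} : Set TBAH) = Set.univ)
    -- (B ⊗_max A) ⊗ H ⊗ H
    (l : TBA →⋆ₐ[ℂ] TBAHH) (lH1 lH2 : H →⋆ₐ[ℂ] TBAHH)
    (hlcomm1 : ∀ (x : TBA) (h : H), Commute (l x) (lH1 h))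
    (hlcomm2 : ∀ (x : TBA) (h : H), Commute (l x) (lH2 h))
    (hlcomm3 : ∀ (h h' : H), Commute (lH1 h) (lH2 h'))
    (hldense : closure (Submodule.span ℂ
      {t : TBAHH | ∃ (x : TBA) (h h' : H), t = l x * lH1 h * lH2 h'} : Set TBAHH)
      = Set.univ)
    (ι₁₂ : TBAH →⋆ₐ[ℂ] TBAHH)
    (hι₁₂ : ∀ (x : TBA) (h : H), ι₁₂ (kBA x * kH2 h) = l x * lH1 h)
    (w : TH2 →⋆ₐ[ℂ] TBAHH) (hw : ∀ h h' : H, w (d₁ h * d₂ h') = lH1 h * lH2 h')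
    (τ : T3 →⋆ₐ[ℂ] TBAHH)
    (hτ : ∀ (a : A) (h h' : H), τ (k₁ a * k₂ h * k₃ h') = l (mA a) * lH1 h * lH2 h')
    -- the embedding `μ : A ⊗_min H → (B ⊗_max A) ⊗_min H` and the lifted coaction `α̃`
    (μ : T2 →⋆ₐ[ℂ] TBAH) (hμ : ∀ (a : A) (h : H), μ (jA a * jH h) = kBA (mA a) * kH2 h)
    (αt : TBA →⋆ₐ[ℂ] TBAH)
    (hαt : ∀ (b : B) (a : A), αt (mB b * mA a) = kBA (mB b) * μ (α a))
    (β' : TBAH →⋆ₐ[ℂ] TBAHH)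
    (hβ' : ∀ (x : TBA) (h : H), β' (kBA x * kH2 h) = ι₁₂ (αt x) * lH2 h)
    (γ' : TBAH →⋆ₐ[ℂ] TBAHH)
    (hγ' : ∀ (x : TBA) (h : H), γ' (kBA x * kH2 h) = l x * w (δ h))
    (S : TBAH →L[ℂ] TBA)
    (hS : ∀ (x : TBA) (h : H), S (kBA x * kH2 h) = ε h • x) :
    (∀ z : TBA, β' (αt z) = γ' (αt z)) ∧ (∀ z : TBA, S (αt z) = z) := by
    -- unitality specializations
  have hαtA : ∀ a : A, αt (mA a) = μ (α a) := fun a => by simpa using hαt 1 a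
  have hαtB : ∀ b : B, αt (mB b) = kBA (mB b) := fun b => by simpa using hαt b 1
  have hβ'kBA : ∀ x : TBA, β' (kBA x) = ι₁₂ (αt x) := fun x => by simpa using hβ' x 1
  have hγ'kBA : ∀ x : TBA, γ' (kBA x) = l x := fun x => by simpa using hγ' x 1
  have hι₁₂kBA : ∀ x : TBA, ι₁₂ (kBA x) = l x := fun x => by simpa using hι₁₂ x 1
  have hτ1 : ∀ a : A, τ (k₁ a) = l (mA a) := fun a => by simpa using hτ a 1 1
  have hτ3 : ∀ h : H, τ (k₃ h) = lH2 h := fun h => by simpa using hτ 1 1 h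
  -- `ι₁₂ ∘ μ = τ ∘ m₁₂`
  have key1 : ∀ t : T2, ι₁₂ (μ t) = τ (m₁₂ t) := by
    refine dense_ext hjdense ((StarAlgHomCLM ι₁₂).comp (StarAlgHomCLM μ))
      ((StarAlgHomCLM τ).comp (StarAlgHomCLM m₁₂)) ?_
    rintro _ ⟨a, h, rfl⟩
    simp only [ContinuousLinearMap.comp_apply, StarAlgHomCLM_apply]
    rw [hμ, hι₁₂, hm₁₂]
    have := hτ a h 1
    simp only [map_one, mul_one] at this
    exact this.symm
  -- `τ ∘ m₂₃ = w`
  have key2 : ∀ t : TH2, τ (m₂₃ t) = w t := by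
    refine dense_ext hddense ((StarAlgHomCLM τ).comp (StarAlgHomCLM m₂₃))
      (StarAlgHomCLM w) ?_
    rintro _ ⟨h, h', rfl⟩
    simp only [ContinuousLinearMap.comp_apply, StarAlgHomCLM_apply]
    rw [hm₂₃, hw]
    simpa using hτ 1 h h'
  -- `β' ∘ μ = τ ∘ β`
  have keyβ : ∀ t : T2, β' (μ t) = τ (β t) := by
    refine dense_ext hjdense ((StarAlgHomCLM β').comp (StarAlgHomCLM μ))
      ((StarAlgHomCLM τ).comp (StarAlgHomCLM β)) ?_
    rintro _ ⟨a, h, rfl⟩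
    simp only [ContinuousLinearMap.comp_apply, StarAlgHomCLM_apply]
    rw [hμ, hβ', hβ, map_mul, hτ3, hαtA, key1]
  -- `γ' ∘ μ = τ ∘ γ`
  have keyγ : ∀ t : T2, γ' (μ t) = τ (γ t) := by
    refine dense_ext hjdense ((StarAlgHomCLM γ').comp (StarAlgHomCLM μ))
      ((StarAlgHomCLM τ).comp (StarAlgHomCLM γ)) ?_
    rintro _ ⟨a, h, rfl⟩
    simp only [ContinuousLinearMap.comp_apply, StarAlgHomCLM_apply]
    rw [hμ, hγ', hγ, map_mul, hτ1, key2]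
  constructor
  · refine dense_ext hmdense ((StarAlgHomCLM β').comp (StarAlgHomCLM αt))
      ((StarAlgHomCLM γ').comp (StarAlgHomCLM αt)) ?_
    rintro _ ⟨b, a, rfl⟩
    simp only [ContinuousLinearMap.comp_apply, StarAlgHomCLM_apply]
    rw [hαt]
    calc β' (kBA (mB b) * μ (α a))
        = β' (kBA (mB b)) * β' (μ (α a)) := map_mul _ _ _
      _ = ι₁₂ (kBA (mB b)) * τ (β (α a)) := by rw [hβ'kBA, hαtB, keyβ]
      _ = l (mB b) * τ (γ (α a)) := by rw [hι₁₂kBA, hcoact]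
      _ = γ' (kBA (mB b)) * γ' (μ (α a)) := by rw [hγ'kBA, keyγ]
      _ = γ' (kBA (mB b) * μ (α a)) := (map_mul _ _ _).symm
  · have keyS : ∀ (b : B) (t : T2), S (kBA (mB b) * μ t) = mB b * mA (Sc t) := by
      intro b
      refine dense_ext hjdense
        (S.comp ((ContinuousLinearMap.mul ℂ TBAH (kBA (mB b))).comp (StarAlgHomCLM μ)))
        ((ContinuousLinearMap.mul ℂ TBA (mB b)).comp ((StarAlgHomCLM mA).comp Sc)) ?_
      rintro _ ⟨a, h, rfl⟩
      simp only [ContinuousLinearMap.comp_apply, StarAlgHomCLM_apply,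
        ContinuousLinearMap.mul_apply']
      rw [hμ, hSc, ← mul_assoc, ← map_mul, hS]
      simp [mul_smul_comm]
    refine dense_ext hmdense (S.comp (StarAlgHomCLM αt)) (ContinuousLinearMap.id ℂ TBA) ?_
    rintro _ ⟨b, a, rfl⟩
    simp only [ContinuousLinearMap.comp_apply, StarAlgHomCLM_apply,
      ContinuousLinearMap.id_apply]
    rw [hαt, keyS, hcounit]
end
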